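/- Let f : ℝⁿ → ℝ be continuously differentiable and let g be as defined in the context. Let 0 < a ≤ b < ∞, and let {x^k} ⊂ ℝⁿ, {μ_k} ⊂ [a, b], and {x̄^k} ⊂ ℝⁿ be sequences with x̄^k ∈ prox_{μ_k⁻¹ g}(x^k − μ_k⁻¹∇f(x^k)) for every k. If x^k → x*, x̄^k → x*, and μ_k → μ* ∈ [a, b], then x* ∈ prox_{μ*⁻¹ g}(x* − μ*⁻¹∇f(x*)); that is, x* is an L-stationary point of the problem min_{x} f(x) + g(x). -/

import Mathlib

/-!
The prox objective `(μ/2)‖x − z‖² + λ₁‖Bx‖₀ + λ₂‖x‖₀` is continuous in `(μ, z)` and, in `x`,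
continuous up to the ℓ₀ terms, which are lower semicontinuous because a nonzero entry of a limit
stays nonzero nearby. So the minimality inequality of `x̄ᵏ` against a fixed `y ∈ Ω` passes to the
limit, and `x* ∈ Ω` since `Ω` is closed. The prox centers `xᵏ − μₖ⁻¹∇f(xᵏ)` converge because
`∇f` is continuous and `μ* ≥ a > 0`.
-/

open Filter Topology
open scoped Classical

noncomputable section

/-- The box `Ω = {x : l ≤ x ≤ u}` in ℝⁿ. -/
def Om {n : ℕ} (l u : Fin n → ℝ) : Set (EuclideanSpace ℝ (Fin n)) :=
  {x | ∀ i, l i ≤ x i ∧ x i ≤ u i}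

/-- The ℓ₀-norm (number of nonzero entries) of a vector. -/
def zeroNorm {m : ℕ} (v : Fin m → ℝ) : ℕ := (Function.support v).ncard

/-- `prox_{μ⁻¹ g}(z)`: the set of minimizers of `(μ/2)‖·−z‖² + λ₁‖B·‖₀ + λ₂‖·‖₀` over Ω. -/
def proxSet {n p : ℕ} (B : Matrix (Fin p) (Fin n) ℝ) (lam1 lam2 : ℝ) (l u : Fin n → ℝ)
    (μ : ℝ) (z : EuclideanSpace ℝ (Fin n)) : Set (EuclideanSpace ℝ (Fin n)) :=
  {x | x ∈ Om l u ∧ ∀ y ∈ Om l u,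
    μ / 2 * ‖x - z‖ ^ 2 + lam1 * (zeroNorm (B.mulVec x) : ℝ) + lam2 * (zeroNorm x : ℝ) ≤
    μ / 2 * ‖y - z‖ ^ 2 + lam1 * (zeroNorm (B.mulVec y) : ℝ) + lam2 * (zeroNorm y : ℝ)}

theorem continuous_gradient_of_contDiff {E : Type*} [NormedAddCommGroup E]
    [InnerProductSpace ℝ E] [CompleteSpace E] {f : E → ℝ} (hf : ContDiff ℝ 1 f) :
    Continuous (gradient f) :=
  (InnerProductSpace.toDual ℝ E).symm.continuous.comp (hf.continuous_fderiv one_ne_zero)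

theorem isClosed_Om {n : ℕ} (l u : Fin n → ℝ) : IsClosed (Om l u) := by
  simp only [Om, Set.ofPred_forall, Set.ofPred_and]
  exact isClosed_iInter fun i =>
    (isClosed_le continuous_const (PiLp.continuous_apply 2 _ i)).inter
      (isClosed_le (PiLp.continuous_apply 2 _ i) continuous_const)

theorem eventually_zeroNorm_le_of_tendsto {α : Type*} {F : Filter α} {m : ℕ}
    {v : α → Fin m → ℝ} {w : Fin m → ℝ} (h : Tendsto v F (𝓝 w)) :
    ∀ᶠ k in F, zeroNorm w ≤ zeroNorm (v k) := by
  have hsupp : ∀ᶠ k in F, ∀ i, w i ≠ 0 → v k i ≠ 0 := by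
    refine eventually_all.2 fun i => ?_
    by_cases hwi : w i = 0
    · exact Eventually.of_forall fun _ hne => absurd hwi hne
    · exact ((tendsto_pi_nhds.1 h i).eventually_ne hwi).mono fun _ hk _ => hk
  exact hsupp.mono fun k hk => Set.ncard_le_ncard hk (Set.toFinite _)

theorem mem_proxSet_of_tendsto {α : Type*} {F : Filter α} [F.NeBot] {n p : ℕ}
    (B : Matrix (Fin p) (Fin n) ℝ) {lam1 lam2 : ℝ} (hlam1 : 0 ≤ lam1) (hlam2 : 0 ≤ lam2)
    (l u : Fin n → ℝ) {μ : α → ℝ} {z xbar : α → EuclideanSpace ℝ (Fin n)}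
    {μstar : ℝ} {zstar xstar : EuclideanSpace ℝ (Fin n)}
    (hprox : ∀ᶠ k in F, xbar k ∈ proxSet B lam1 lam2 l u (μ k) (z k))
    (hμ : Tendsto μ F (𝓝 μstar)) (hz : Tendsto z F (𝓝 zstar))
    (hxbar : Tendsto xbar F (𝓝 xstar)) :
    xstar ∈ proxSet B lam1 lam2 l u μstar zstar := by
  refine ⟨(isClosed_Om l u).mem_of_tendsto hxbar (hprox.mono fun _ hk => hk.1), fun y hy => ?_⟩
  have hcoord : Tendsto (fun k => WithLp.ofLp (xbar k)) F (𝓝 (WithLp.ofLp xstar)) :=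
    (PiLp.continuous_ofLp 2 _).continuousAt.tendsto.comp hxbar
  have hBcoord :
      Tendsto (fun k => B.mulVec (WithLp.ofLp (xbar k))) F (𝓝 (B.mulVec (WithLp.ofLp xstar))) :=
    (continuous_const.matrix_mulVec continuous_id).continuousAt.tendsto.comp hcoord
  have hpenalty : ∀ᶠ k in F,
      lam1 * (zeroNorm (B.mulVec xstar) : ℝ) + lam2 * (zeroNorm xstar : ℝ) ≤
        lam1 * (zeroNorm (B.mulVec (xbar k)) : ℝ) + lam2 * (zeroNorm (xbar k) : ℝ) := by
    filter_upwards [eventually_zeroNorm_le_of_tendsto hBcoord,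
      eventually_zeroNorm_le_of_tendsto hcoord] with k h1 h2
    gcongr
  have hlhs : Tendsto (fun k => μ k / 2 * ‖xbar k - z k‖ ^ 2) F
      (𝓝 (μstar / 2 * ‖xstar - zstar‖ ^ 2)) :=
    (hμ.div_const 2).mul ((hxbar.sub hz).norm.pow 2)
  have hrhs : Tendsto (fun k => μ k / 2 * ‖y - z k‖ ^ 2) F (𝓝 (μstar / 2 * ‖y - zstar‖ ^ 2)) :=
    (hμ.div_const 2).mul ((tendsto_const_nhds.sub hz).norm.pow 2)
  refine le_of_tendsto_of_tendsto ((hlhs.add_const _).add_const _)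
    ((hrhs.add_const _).add_const _) ?_
  filter_upwards [hprox, hpenalty] with k hk hpen
  linarith [hk.2 y hy]

theorem stmt16_general {n p : ℕ} (B : Matrix (Fin p) (Fin n) ℝ) (lam1 lam2 : ℝ)
    (hlam1 : 0 < lam1) (hlam2 : 0 < lam2)
    (l u : Fin n → ℝ)
    (f : EuclideanSpace ℝ (Fin n) → ℝ) (hf : ContDiff ℝ 1 f)
    (a b : ℝ) (ha : 0 < a)
    (x xbar : ℕ → EuclideanSpace ℝ (Fin n)) (μ : ℕ → ℝ)
    (hprox : ∀ k, xbar k ∈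
      proxSet B lam1 lam2 l u (μ k) (x k - (μ k)⁻¹ • gradient f (x k)))
    (xstar : EuclideanSpace ℝ (Fin n)) (μstar : ℝ)
    (hxlim : Tendsto x atTop (nhds xstar))
    (hxbarlim : Tendsto xbar atTop (nhds xstar))
    (hμlim : Tendsto μ atTop (nhds μstar))
    (hμstar : a ≤ μstar ∧ μstar ≤ b) :
    xstar ∈ proxSet B lam1 lam2 l u μstar (xstar - μstar⁻¹ • gradient f xstar) := by
  have hμstar_ne : μstar ≠ 0 := (ha.trans_le hμstar.1).ne'
  have hgrad : Tendsto (fun k => gradient f (x k)) atTop (𝓝 (gradient f xstar)) :=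
    ((continuous_gradient_of_contDiff hf).tendsto xstar).comp hxlim
  exact mem_proxSet_of_tendsto B hlam1.le hlam2.le l u (Eventually.of_forall hprox) hμlim
    (hxlim.sub ((hμlim.inv₀ hμstar_ne).smul hgrad)) hxbarlim

/-- outer semicontinuity of the proximal mapping of `g` along PG iterates:
if `x̄^k ∈ prox_{μ_k⁻¹g}(x^k − μ_k⁻¹∇f(x^k))` with `μ_k ∈ [a,b]`, `x^k → x*`, `x̄^k → x*`
and `μ_k → μ* ∈ [a,b]`, then `x* ∈ prox_{μ*⁻¹g}(x* − μ*⁻¹∇f(x*))`, i.e. `x*` is an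
L-stationary point of `min f + g`. -/
theorem stmt16 {n p : ℕ} (B : Matrix (Fin p) (Fin n) ℝ) (lam1 lam2 : ℝ)
    (hlam1 : 0 < lam1) (hlam2 : 0 < lam2)
    (l u : Fin n → ℝ) (hl : ∀ i, l i ≤ 0) (hu : ∀ i, 0 ≤ u i)
    (f : EuclideanSpace ℝ (Fin n) → ℝ) (hf : ContDiff ℝ 1 f)
    (a b : ℝ) (ha : 0 < a) (hab : a ≤ b)
    (x xbar : ℕ → EuclideanSpace ℝ (Fin n)) (μ : ℕ → ℝ)
    (hμ : ∀ k, a ≤ μ k ∧ μ k ≤ b)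
    (hprox : ∀ k, xbar k ∈
      proxSet B lam1 lam2 l u (μ k) (x k - (μ k)⁻¹ • gradient f (x k)))
    (xstar : EuclideanSpace ℝ (Fin n)) (μstar : ℝ)
    (hxlim : Tendsto x atTop (nhds xstar))
    (hxbarlim : Tendsto xbar atTop (nhds xstar))
    (hμlim : Tendsto μ atTop (nhds μstar))
    (hμstar : a ≤ μstar ∧ μstar ≤ b) :
    xstar ∈ proxSet B lam1 lam2 l u μstar (xstar - μstar⁻¹ • gradient f xstar) :=
  stmt16_general B lam1 lam2 hlam1 hlam2 l u f hf a b ha x xbar μ hprox xstar μstar hxlim hxbarlim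
    hμlim hμstar

end
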